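/- arXiv:1702.04625 — 3 statements merged into one kernel-verified Lean document; each statement's English description precedes it below -/
import Mathlib

section
/- Let J(δ) = ∫₀^δ λ(ε) dε where λ is non-increasing, λ ≥ 1 on (0,∞), and J(1) < ∞. Then the map (x,y) ↦ J(√(x/y))·√y is concave on [0,∞) × (0,∞). -/
/-!
`J(t) = ∫₀ᵗ λ` is concave on `[0, ∞)` because its slopes are averages of the non-increasing `λ`,
and non-decreasing because `λ ≥ 0`. The perspective `(u, v) ↦ J(u / v) · v` of a concave function
is concave; here it is moreover non-decreasing in each variable, in `v` because for `v ≤ w`,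
`u / w = (v / w) (u / v) + (1 - v / w) · 0` and concavity with `J 0 = 0` give
`J(u / w) w ≥ J(u / v) v`. Composing this coordinatewise monotone concave map with the concave map
`(x, y) ↦ (√x, √y)` gives the claim, since `√(x / y) = √x / √y`.
-/

open MeasureTheory Set

section EntropyIntegral

variable {lam : ℝ → ℝ}

lemma intervalIntegrable_of_forall_intervalIntegrable_zero
    (hint : ∀ δ : ℝ, 0 < δ → IntervalIntegrable lam volume 0 δ) {s t : ℝ} (hs : 0 ≤ s)
    (ht : 0 ≤ t) : IntervalIntegrable lam volume s t := by
  have h0 : ∀ u : ℝ, 0 ≤ u → IntervalIntegrable lam volume 0 u := fun u hu =>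
    hu.eq_or_lt.elim (fun h => h ▸ IntervalIntegrable.refl) (hint u)
  exact (h0 s hs).symm.trans (h0 t ht)

lemma integral_le_mul_of_antitoneOn (hmono : AntitoneOn lam (Ioi 0)) {s t : ℝ}
    (hst_int : IntervalIntegrable lam volume s t) (hs : 0 < s) (hst : s ≤ t) :
    ∫ ε in s..t, lam ε ≤ (t - s) * lam s := by
  rw [← smul_eq_mul, ← intervalIntegral.integral_const]
  exact intervalIntegral.integral_mono_on_of_le_Ioo hst hst_int intervalIntegrable_const
    fun ε hε => hmono hs (hs.trans hε.1) hε.1.le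

lemma mul_le_integral_of_antitoneOn (hmono : AntitoneOn lam (Ioi 0)) {s t : ℝ}
    (hst_int : IntervalIntegrable lam volume s t) (hs : 0 ≤ s) (hst : s ≤ t) :
    (t - s) * lam t ≤ ∫ ε in s..t, lam ε := by
  rw [← smul_eq_mul, ← intervalIntegral.integral_const]
  exact intervalIntegral.integral_mono_on_of_le_Ioo hst intervalIntegrable_const hst_int
    fun ε hε => hmono (hs.trans_lt hε.1) (hs.trans_lt (hε.1.trans hε.2)) hε.2.le

theorem concaveOn_integral_of_antitoneOn (hmono : AntitoneOn lam (Ioi 0))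
    (hint : ∀ δ : ℝ, 0 < δ → IntervalIntegrable lam volume 0 δ) :
    ConcaveOn ℝ (Ici 0) fun t => ∫ ε in 0..t, lam ε := by
  refine concaveOn_of_slope_anti_adjacent (convex_Ici 0) fun {x y z} hx hz hxy hyz => ?_
  have hy : (0 : ℝ) ≤ y := le_trans hx hxy.le
  have hI := fun {s t : ℝ} (hs : 0 ≤ s) (ht : 0 ≤ t) =>
    intervalIntegrable_of_forall_intervalIntegrable_zero hint hs ht
  rw [intervalIntegral.integral_interval_sub_left (hI le_rfl hz) (hI le_rfl hy),
    intervalIntegral.integral_interval_sub_left (hI le_rfl hy) (hI le_rfl hx)]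
  calc (∫ ε in y..z, lam ε) / (z - y) ≤ lam y := by
        rw [div_le_iff₀ (sub_pos.2 hyz), mul_comm]
        exact integral_le_mul_of_antitoneOn hmono (hI hy hz) (hx.trans_lt hxy) hyz.le
    _ ≤ (∫ ε in x..y, lam ε) / (y - x) := by
        rw [le_div_iff₀ (sub_pos.2 hxy), mul_comm]
        exact mul_le_integral_of_antitoneOn hmono (hI hx hy) hx hxy.le

theorem monotoneOn_integral_of_nonneg (hnonneg : ∀ ε : ℝ, 0 < ε → 0 ≤ lam ε)
    (hint : ∀ δ : ℝ, 0 < δ → IntervalIntegrable lam volume 0 δ) :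
    MonotoneOn (fun t => ∫ ε in 0..t, lam ε) (Ici 0) := by
  intro s hs t ht hst
  have hI := fun {s t : ℝ} (hs : 0 ≤ s) (ht : 0 ≤ t) =>
    intervalIntegrable_of_forall_intervalIntegrable_zero hint hs ht
  rw [← sub_nonneg, intervalIntegral.integral_interval_sub_left (hI le_rfl ht) (hI le_rfl hs)]
  simpa using intervalIntegral.integral_mono_on_of_le_Ioo hst intervalIntegrable_const
    (hI hs ht) fun ε hε => hnonneg ε ((mem_Ici.1 hs).trans_lt hε.1)

end EntropyIntegral

theorem ConcaveOn.prodMap {𝕜 E F β γ : Type*} [Semiring 𝕜] [PartialOrder 𝕜]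
    [AddCommMonoid E] [AddCommMonoid F] [AddCommMonoid β] [PartialOrder β]
    [AddCommMonoid γ] [PartialOrder γ] [SMul 𝕜 E] [SMul 𝕜 F] [SMul 𝕜 β] [SMul 𝕜 γ]
    {s : Set E} {t : Set F} {f : E → β} {g : F → γ}
    (hf : ConcaveOn 𝕜 s f) (hg : ConcaveOn 𝕜 t g) :
    ConcaveOn 𝕜 (s ×ˢ t) (Prod.map f g) :=
  ⟨hf.1.prod hg.1, fun _ hp _ hq _ _ ha hb hab =>
    ⟨hf.2 hp.1 hq.1 ha hb hab, hg.2 hp.2 hq.2 ha hb hab⟩⟩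

lemma Real.image_sqrt_Ici : Real.sqrt '' Ici 0 = Ici 0 :=
  Subset.antisymm (image_subset_iff.2 fun x _ => Real.sqrt_nonneg x)
    fun y hy => ⟨y ^ 2, sq_nonneg y, Real.sqrt_sq hy⟩

lemma Real.image_sqrt_Ioi : Real.sqrt '' Ioi 0 = Ioi 0 :=
  Subset.antisymm (image_subset_iff.2 fun _ hx => Real.sqrt_pos.2 hx)
    fun y hy => ⟨y ^ 2, mem_Ioi.2 (pow_pos hy 2), Real.sqrt_sq (le_of_lt hy)⟩

noncomputable def perspective (f : ℝ → ℝ) (p : ℝ × ℝ) : ℝ := f (p.1 / p.2) * p.2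

section Perspective

variable {f : ℝ → ℝ}

theorem concaveOn_perspective (hf : ConcaveOn ℝ (Ici 0) f) :
    ConcaveOn ℝ (Ici 0 ×ˢ Ioi 0) (perspective f) := by
  refine ⟨(convex_Ici 0).prod (convex_Ioi 0), ?_⟩
  rintro ⟨u₁, v₁⟩ ⟨hu₁, hv₁⟩ ⟨u₂, v₂⟩ ⟨hu₂, hv₂⟩ a b ha hb hab
  simp only [mem_Ici, mem_Ioi] at hu₁ hv₁ hu₂ hv₂
  simp only [perspective, Prod.smul_mk, Prod.mk_add_mk, smul_eq_mul]
  set V := a * v₁ + b * v₂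
  have hV : 0 < V := convex_Ioi (0 : ℝ) hv₁ hv₂ ha hb hab
  -- `(a u₁ + b u₂) / V` is the mean of the `uᵢ / vᵢ` with weights proportional to `vᵢ`
  have hc := hf.2 (mem_Ici.2 (div_nonneg hu₁ hv₁.le)) (mem_Ici.2 (div_nonneg hu₂ hv₂.le))
    (by positivity : 0 ≤ a * v₁ / V) (by positivity : 0 ≤ b * v₂ / V) (by field_simp; rfl)
  have harg : a * v₁ / V * (u₁ / v₁) + b * v₂ / V * (u₂ / v₂) = (a * u₁ + b * u₂) / V := by
    field_simp
  simp only [smul_eq_mul, harg] at hc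
  calc a * (f (u₁ / v₁) * v₁) + b * (f (u₂ / v₂) * v₂)
      = V * (a * v₁ / V * f (u₁ / v₁) + b * v₂ / V * f (u₂ / v₂)) := by field_simp
    _ ≤ V * f ((a * u₁ + b * u₂) / V) := by gcongr
    _ = f ((a * u₁ + b * u₂) / V) * V := mul_comm _ _

theorem perspective_le_perspective_of_le_snd (hf : ConcaveOn ℝ (Ici 0) f) (h0 : 0 ≤ f 0)
    {u v w : ℝ} (hu : 0 ≤ u) (hv : 0 < v) (hvw : v ≤ w) :
    perspective f (u, v) ≤ perspective f (u, w) := by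
  have hw : 0 < w := hv.trans_le hvw
  have hc := hf.2 (mem_Ici.2 (div_nonneg hu hv.le)) (mem_Ici.2 le_rfl)
    (div_nonneg hv.le hw.le) (sub_nonneg.2 ((div_le_one hw).2 hvw)) (add_sub_cancel _ _)
  have harg : (v / w) • (u / v) + (1 - v / w) • (0 : ℝ) = u / w := by
    simp only [smul_eq_mul, mul_zero, add_zero]; field_simp
  rw [harg, smul_eq_mul, smul_eq_mul] at hc
  simp only [perspective]
  calc f (u / v) * v = w * (v / w * f (u / v)) := by field_simp
    _ ≤ w * (v / w * f (u / v) + (1 - v / w) * f 0) := by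
        gcongr
        exact le_add_of_nonneg_right <| mul_nonneg (sub_nonneg.2 ((div_le_one hw).2 hvw)) h0
    _ ≤ f (u / w) * w := by rw [mul_comm]; gcongr

theorem monotoneOn_perspective (hf : ConcaveOn ℝ (Ici 0) f) (hmono : MonotoneOn f (Ici 0))
    (h0 : 0 ≤ f 0) : MonotoneOn (perspective f) (Ici 0 ×ˢ Ioi 0) := by
  rintro ⟨u, v⟩ ⟨hu, hv⟩ ⟨u', v'⟩ ⟨hu', hv'⟩ ⟨huu', hvv'⟩
  simp only [mem_Ici, mem_Ioi] at hu hv hu' hv' huu' hvv'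
  calc perspective f (u, v) ≤ perspective f (u', v) :=
        mul_le_mul_of_nonneg_right (hmono (mem_Ici.2 (div_nonneg hu hv.le))
          (mem_Ici.2 (div_nonneg hu' hv.le)) (div_le_div_of_nonneg_right huu' hv.le)) hv.le
    _ ≤ perspective f (u', v') := perspective_le_perspective_of_le_snd hf h0 hu' hv hvv'

end Perspective

/-- Part 4 of the entropy-integral lemma: for the entropy integral
`J(δ) = ∫₀^δ lam(ε) dε` of a non-increasing function `lam ≥ 1` on `(0,∞)`
with `J(1) < ∞` (integrability up to every finite level), the map
`(x,y) ↦ J(√(x/y))·√y` is concave on `[0,∞) × (0,∞)`. -/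
theorem entropy_integral_sqrt_concave
    (lam : ℝ → ℝ)
    (hmono : AntitoneOn lam (Set.Ioi (0 : ℝ)))
    (hone : ∀ ε : ℝ, 0 < ε → 1 ≤ lam ε)
    (hint : ∀ δ : ℝ, 0 < δ → IntervalIntegrable lam volume 0 δ) :
    ConcaveOn ℝ (Set.Ici (0 : ℝ) ×ˢ Set.Ioi (0 : ℝ))
      (fun p : ℝ × ℝ =>
        (∫ ε in (0 : ℝ)..Real.sqrt (p.1 / p.2), lam ε) * Real.sqrt p.2) := by
  have hJ := concaveOn_integral_of_antitoneOn hmono hint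
  have hJ_mono := monotoneOn_integral_of_nonneg (fun ε hε => zero_le_one.trans (hone ε hε)) hint
  have hsqrt : ConcaveOn ℝ (Ici 0 ×ˢ Ioi 0) (Prod.map Real.sqrt Real.sqrt) :=
    Real.strictConcaveOn_sqrt.concaveOn.prodMap
      (Real.strictConcaveOn_sqrt.concaveOn.subset Ioi_subset_Ici_self (convex_Ioi 0))
  have himage :
      Prod.map Real.sqrt Real.sqrt '' (Ici 0 ×ˢ Ioi 0) = Ici (0 : ℝ) ×ˢ Ioi (0 : ℝ) := by
    rw [prodMap_image_prod, Real.image_sqrt_Ici, Real.image_sqrt_Ioi]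
  have hP := concaveOn_perspective hJ
  have hP_mono := monotoneOn_perspective hJ hJ_mono (by simp)
  rw [← himage] at hP hP_mono
  refine (hP.comp hsqrt hP_mono).congr ?_
  rintro ⟨x, y⟩ ⟨hx, -⟩
  simp only [Function.comp_apply, perspective, Prod.map_apply, Real.sqrt_div (mem_Ici.1 hx)]
end

section
/- For all real a, b with |b| arbitrary: log(1 + e^{a+b}) − log(1 + e^a) − b·Λ(a) ≥ Λ(a)(1 − Λ(a))·(b²/2 − |b|³/6), where Λ(x) = eˣ/(1+eˣ). -/
/-!
Write `σ` for the logistic function, `softplus x = log (1 + eˣ)` and `v = σ (1 - σ)`, so that the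
remainder `R(b) = softplus (a + b) - softplus a - b σ(a)` satisfies `R''(b) = v(a + b)`. The
self-concordance bound `v(a + s) ≥ v(a) e^{-s}` for `s ≥ 0` follows from `v(x) = σ(x) σ(-x)`, the
monotonicity of `σ` and `σ(-x - s) ≥ e^{-s} σ(-x)`. Integrating it twice, with `e^{-s} ≥ 1 - s`,
gives the claim for `b ≥ 0`; since `R` is invariant under `(a, b) ↦ (-a, -b)`, this covers `b ≤ 0`.
-/

open Real Set

noncomputable def softplus (x : ℝ) : ℝ := log (1 + exp x)

lemma softplus_neg (x : ℝ) : softplus (-x) = softplus x - x := by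
  have h : 1 + exp x = exp x * (1 + exp (-x)) := by
    rw [mul_add, mul_one, ← exp_add, add_neg_cancel, exp_zero, add_comm]
  rw [softplus, softplus, h, log_mul (exp_pos x).ne' (by positivity), log_exp]
  ring

lemma exp_div_one_add_exp (x : ℝ) : exp x / (1 + exp x) = sigmoid x := by
  rw [sigmoid_def, exp_neg]
  field_simp
  ring

lemma hasDerivAt_softplus (x : ℝ) : HasDerivAt softplus (sigmoid x) x := by
  rw [← exp_div_one_add_exp]
  exact ((hasDerivAt_exp x).const_add 1).log (by positivity)

noncomputable def softplusRemainder (a b : ℝ) : ℝ := softplus (a + b) - softplus a - b * sigmoid a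

lemma softplusRemainder_neg_neg (a b : ℝ) :
    softplusRemainder (-a) (-b) = softplusRemainder a b := by
  rw [softplusRemainder, softplusRemainder, ← neg_add, softplus_neg, softplus_neg, sigmoid_neg]
  ring

lemma sigmoid_mul_one_sub_sigmoid_neg (x : ℝ) :
    sigmoid (-x) * (1 - sigmoid (-x)) = sigmoid x * (1 - sigmoid x) := by
  rw [sigmoid_neg]
  ring

lemma exp_neg_mul_sigmoid_le_sigmoid_sub (x : ℝ) {t : ℝ} (ht : 0 ≤ t) :
    exp (-t) * sigmoid x ≤ sigmoid (x - t) := by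
  have h : 1 + exp (-(x - t)) ≤ exp t * (1 + exp (-x)) := by
    rw [neg_sub, sub_eq_add_neg, exp_add, mul_add, mul_one]
    gcongr
    exact one_le_exp ht
  rw [sigmoid_def, sigmoid_def, exp_neg, ← mul_inv]
  gcongr

lemma sigmoid_mul_one_sub_sigmoid_mul_exp_neg_le (x : ℝ) {t : ℝ} (ht : 0 ≤ t) :
    sigmoid x * (1 - sigmoid x) * exp (-t) ≤ sigmoid (x + t) * (1 - sigmoid (x + t)) := by
  rw [← sigmoid_neg, ← sigmoid_neg, mul_assoc, mul_comm (sigmoid (-x))]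
  have hσ : sigmoid x ≤ sigmoid (x + t) := sigmoid_le (by linarith)
  have hσneg : exp (-t) * sigmoid (-x) ≤ sigmoid (-(x + t)) := by
    rw [neg_add, ← sub_eq_add_neg]
    exact exp_neg_mul_sigmoid_le_sigmoid_sub (-x) ht
  exact mul_le_mul hσ hσneg (mul_nonneg (exp_pos _).le (sigmoid_pos _).le) (sigmoid_pos _).le

lemma image_le_of_hasDerivAt_le {f g f' g' : ℝ → ℝ} {a b : ℝ}
    (hf : ∀ x, HasDerivAt f (f' x) x) (hg : ∀ x, HasDerivAt g (g' x) x) (ha : f a ≤ g a)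
    (hfg : ∀ x ∈ Ico a b, f' x ≤ g' x) (hab : a ≤ b) : f b ≤ g b :=
  image_le_of_deriv_right_le_deriv_boundary (fun x _ => (hf x).continuousAt.continuousWithinAt)
    (fun x _ => (hf x).hasDerivWithinAt) ha (fun x _ => (hg x).continuousAt.continuousWithinAt)
    (fun x _ => (hg x).hasDerivWithinAt) hfg ⟨hab, le_rfl⟩

lemma le_sigmoid_add_sub_sigmoid (a : ℝ) {b : ℝ} (hb : 0 ≤ b) :
    sigmoid a * (1 - sigmoid a) * (b - b ^ 2 / 2) ≤ sigmoid (a + b) - sigmoid a := by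
  set v := sigmoid a * (1 - sigmoid a)
  have hv : 0 ≤ v := mul_nonneg (sigmoid_pos a).le (sub_nonneg.2 (sigmoid_le_one a))
  suffices v * (b - b ^ 2 / 2) + sigmoid a ≤ sigmoid (a + b) by linarith
  refine image_le_of_hasDerivAt_le (f := fun s => v * (s - s ^ 2 / 2) + sigmoid a)
    (f' := fun s => v * (1 - s)) (g' := fun s => sigmoid (a + s) * (1 - sigmoid (a + s)))
    (fun s => ?_) (fun s => (hasDerivAt_sigmoid (a + s)).comp_const_add a s) (by simp)
    (fun s hs => ?_) hb
  · exact ((((hasDerivAt_id' s).sub ((hasDerivAt_pow 2 s).div_const 2)).const_mul v).add_const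
      (sigmoid a)).congr_deriv (by ring)
  · calc v * (1 - s) ≤ v * exp (-s) := by gcongr; linarith [add_one_le_exp (-s)]
      _ ≤ sigmoid (a + s) * (1 - sigmoid (a + s)) :=
        sigmoid_mul_one_sub_sigmoid_mul_exp_neg_le a hs.1

lemma le_softplusRemainder (a : ℝ) {b : ℝ} (hb : 0 ≤ b) :
    sigmoid a * (1 - sigmoid a) * (b ^ 2 / 2 - b ^ 3 / 6) ≤ softplusRemainder a b := by
  set v := sigmoid a * (1 - sigmoid a)
  suffices v * (b ^ 2 / 2 - b ^ 3 / 6) + softplus a + b * sigmoid a ≤ softplus (a + b) by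
    rw [softplusRemainder]; linarith
  refine image_le_of_hasDerivAt_le
    (f := fun s => v * (s ^ 2 / 2 - s ^ 3 / 6) + softplus a + s * sigmoid a)
    (f' := fun s => v * (s - s ^ 2 / 2) + sigmoid a)
    (fun s => ?_) (fun s => (hasDerivAt_softplus (a + s)).comp_const_add a s) (by simp)
    (fun s hs => ?_) hb
  · exact (((((hasDerivAt_pow 2 s).div_const 2).sub ((hasDerivAt_pow 3 s).div_const 6)).const_mul
      v).add_const (softplus a)).add ((hasDerivAt_id' s).mul_const (sigmoid a)) |>.congr_deriv
      (by ring)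
  · linarith [le_sigmoid_add_sub_sigmoid a hs.1]

/-- Self-concordance-type minoration of the logistic loss: for all reals `a, b`,
`log(1 + e^{a+b}) − log(1 + e^a) − b·Λ(a) ≥ Λ(a)(1−Λ(a))·(b²/2 − |b|³/6)`,
where `Λ(x) = eˣ/(1+eˣ)`. -/
theorem logistic_self_concordance (a b : ℝ) :
    let Λ : ℝ → ℝ := fun x => Real.exp x / (1 + Real.exp x)
    Real.log (1 + Real.exp (a + b)) - Real.log (1 + Real.exp a) - b * Λ a
      ≥ Λ a * (1 - Λ a) * (b^2 / 2 - |b|^3 / 6) := by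
  intro Λ
  have hΛ : Λ = sigmoid := funext exp_div_one_add_exp
  rw [hΛ]
  change softplusRemainder a b ≥ _
  rcases le_total 0 b with hb | hb
  · rw [abs_of_nonneg hb]
    exact le_softplusRemainder a hb
  · rw [abs_of_nonpos hb, ← softplusRemainder_neg_neg, ← sigmoid_mul_one_sub_sigmoid_neg]
    convert le_softplusRemainder (-a) (neg_nonneg.2 hb) using 2
    ring
end

section
/- Let Q(θ̂) − Q(θ) ≤ (λ/n)(L‖Ψ(δ)_S‖₁ − l‖Ψ(δ)_{Sᶜ}‖₁) and Q(θ̂) − Q(θ) ≥ ∇Q(θ)'δ with |∇Q(θ)'δ| ≤ (λ/(nC))‖Ψδ‖₁ + r·Γ, where δ = θ̂ − θ, Γ ≥ 0, r ≥ 0, constants satisfy lC > 1, L ≥ l > 0. Then (λ(lC−1)/(nC))‖Ψ(δ)_{Sᶜ}‖₁ ≤ (λ(LC+1)/(nC))‖Ψ(δ)_S‖₁ + r·Γ; in particular if r·Γ = 0 then δ lies in the cone {δ : ‖Ψ(δ)_{Sᶜ}‖₁ ≤ ((LC+1)/(lC−1))‖Ψ(δ)_S‖₁}. -/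
theorem weighted_cone_bound_of_abs_score_le {a C L l ρ g Qd NS NSc : ℝ}
    (hupper : Qd ≤ a * C * (L * NS - l * NSc)) (hlower : g ≤ Qd)
    (hgrad : |g| ≤ a * (NS + NSc) + ρ) :
    a * (l * C - 1) * NSc ≤ a * (L * C + 1) * NS + ρ := by
  have hscore : -(a * (NS + NSc) + ρ) ≤ g := neg_le_of_abs_le hgrad
  linarith

theorem le_div_mul_of_mul_le_mul {a k K x y : ℝ} (ha : 0 < a) (hk : 0 < k)
    (h : a * k * x ≤ a * K * y) : x ≤ K / k * y := by
  rw [div_mul_eq_mul_div, le_div_iff₀ hk]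
  nlinarith

theorem lasso_cone_membership_general
    (Qd g lam n C l L r Γ NS NSc : ℝ)
    (hlam : 0 < lam) (hn : 0 < n) (hC : 0 < C)
    (hlC : 1 < l * C)
    (hupper : Qd ≤ (lam / n) * (L * NS - l * NSc))
    (hlower : g ≤ Qd)
    (hgrad : |g| ≤ (lam / (n * C)) * (NS + NSc) + r * Γ) :
    (lam * (l * C - 1) / (n * C)) * NSc
      ≤ (lam * (L * C + 1) / (n * C)) * NS + r * Γ ∧
    (r * Γ = 0 → NSc ≤ ((L * C + 1) / (l * C - 1)) * NS) := by
  have hscale : lam / n = lam / (n * C) * C := by field_simp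
  have hbound := weighted_cone_bound_of_abs_score_le (hscale ▸ hupper) hlower hgrad
  refine ⟨by simpa only [mul_div_right_comm] using hbound, fun hrΓ => ?_⟩
  rw [hrΓ, add_zero] at hbound
  exact le_div_mul_of_mul_le_mul (by positivity) (by linarith) hbound

/-- Cone-membership deduction for penalized estimators: with
`NS = ‖Ψ(δ)_S‖₁`, `NSc = ‖Ψ(δ)_{Sᶜ}‖₁` (so `‖Ψδ‖₁ = NS + NSc`), if the
penalized minimizer satisfies
`Q(θ̂) − Q(θ) ≤ (λ/n)(L·NS − l·NSc)`, convexity gives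
`Q(θ̂) − Q(θ) ≥ ∇Q(θ)'δ =: g`, and the score is dominated as
`|g| ≤ (λ/(nC))·(NS+NSc) + r·Γ`, with `lC > 1`, `L ≥ l > 0`, then
`(λ(lC−1)/(nC))·NSc ≤ (λ(LC+1)/(nC))·NS + r·Γ`; in particular, if `r·Γ = 0`
then `δ` lies in the cone `NSc ≤ ((LC+1)/(lC−1))·NS`. -/
theorem lasso_cone_membership
    (Qd g lam n C l L r Γ NS NSc : ℝ)
    (hlam : 0 < lam) (hn : 0 < n) (hC : 0 < C)
    (hl : 0 < l) (hlL : l ≤ L) (hlC : 1 < l * C)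
    (hr : 0 ≤ r) (hΓ : 0 ≤ Γ) (hNS : 0 ≤ NS) (hNSc : 0 ≤ NSc)
    (hupper : Qd ≤ (lam / n) * (L * NS - l * NSc))
    (hlower : g ≤ Qd)
    (hgrad : |g| ≤ (lam / (n * C)) * (NS + NSc) + r * Γ) :
    (lam * (l * C - 1) / (n * C)) * NSc
      ≤ (lam * (L * C + 1) / (n * C)) * NS + r * Γ ∧
    (r * Γ = 0 → NSc ≤ ((L * C + 1) / (l * C - 1)) * NS) :=
  lasso_cone_membership_general Qd g lam n C l L r Γ NS NSc hlam hn hC hlC hupper hlower hgrad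
end
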